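/- arXiv:1806.03679 — 3 statements merged into one kernel-verified Lean document; each statement's English description precedes it below -/
import Mathlib

section
/- Let P*, P_0, V_0, Q_0 be positive reals, α_p ≠ 0, α_q, Q* reals, with Δ = P*² − (P*/P_0)^{2/α_p}·Q*² + Q_0²·(P*/P_0)^{2α_q/α_p} ≥ 0. Set D = P*² + Q_0²·(P*/P_0)^{2α_q/α_p}, V*_{es,q} = V_0·[(P*/P_0)^{2/α_p}·P*·Q* − Q_0·(P*/P_0)^{(α_q+1)/α_p}·√Δ]/D, and V*_{es,d} = V_0 − V_0·[Q_0·(P*/P_0)^{(α_q+2)/α_p}·Q* + (P*/P_0)^{1/α_p}·P*·√Δ]/D. Then V_0 − V*_{es,d} = −(V_0²·(P*/P_0)^{2/α_p}·(−Q*/V_0) + P*·V*_{es,q}) / (Q_0·(P*/P_0)^{α_q/α_p}). -/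
theorem es_setpoints_Vnld_relation
    (Pstar P0 V0 Q0 : ℝ) (hPstar : 0 < Pstar) (hP0 : 0 < P0) (hV0 : 0 < V0) (hQ0 : 0 < Q0)
    (αp αq Qstar : ℝ) (hαp : αp ≠ 0)
    (Δ : ℝ)
    (hΔ : Δ = Pstar ^ 2 - (Pstar / P0) ^ (2 / αp) * Qstar ^ 2
            + Q0 ^ 2 * (Pstar / P0) ^ (2 * αq / αp))
    (hΔnn : Δ ≥ 0)
    (D Vesq Vesd : ℝ)
    (hD : D = Pstar ^ 2 + Q0 ^ 2 * (Pstar / P0) ^ (2 * αq / αp))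
    (hVesq : Vesq = V0 * ((Pstar / P0) ^ (2 / αp) * Pstar * Qstar
              - Q0 * (Pstar / P0) ^ ((αq + 1) / αp) * Real.sqrt Δ) / D)
    (hVesd : Vesd = V0 - V0 * (Q0 * (Pstar / P0) ^ ((αq + 2) / αp) * Qstar
              + (Pstar / P0) ^ (1 / αp) * Pstar * Real.sqrt Δ) / D) :
    V0 - Vesd = -((V0 ^ 2 * (Pstar / P0) ^ (2 / αp) * (-(Qstar / V0)) + Pstar * Vesq)
              / (Q0 * (Pstar / P0) ^ (αq / αp))) := by
  set r : ℝ := Pstar / P0 with hrdef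
  have hr : 0 < r := div_pos hPstar hP0
  set a : ℝ := r ^ (1 / αp) with ha
  set b : ℝ := r ^ (αq / αp) with hb
  have hapos : 0 < a := Real.rpow_pos_of_pos hr _
  have hbpos : 0 < b := Real.rpow_pos_of_pos hr _
  have e1 : r ^ (2 / αp) = a * a := by
    rw [show (2 / αp : ℝ) = 1 / αp + 1 / αp by ring, Real.rpow_add hr]
  have e2 : r ^ (2 * αq / αp) = b * b := by
    rw [show (2 * αq / αp : ℝ) = αq / αp + αq / αp by ring, Real.rpow_add hr]
  have e3 : r ^ ((αq + 1) / αp) = b * a := by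
    rw [show ((αq + 1) / αp : ℝ) = αq / αp + 1 / αp by ring, Real.rpow_add hr]
  have e4 : r ^ ((αq + 2) / αp) = b * a * a := by
    rw [show ((αq + 2) / αp : ℝ) = αq / αp + 1 / αp + 1 / αp by ring,
      Real.rpow_add hr, Real.rpow_add hr]
  have hDpos : 0 < D := by
    rw [hD, e2]; positivity
  rw [hVesd, hVesq, hD, e1, e2, e3, e4]
  field_simp
  ring
end

section
/- Let P*, P_0, V_0, Q_0 be positive reals, α_p ≠ 0, α_q, Q* reals, with Δ = P*² − (P*/P_0)^{2/α_p}·Q*² + Q_0²·(P*/P_0)^{2α_q/α_p} ≥ 0. Set D = P*² + Q_0²·(P*/P_0)^{2α_q/α_p}, V*_{es,q} = V_0·[(P*/P_0)^{2/α_p}·P*·Q* − Q_0·(P*/P_0)^{(α_q+1)/α_p}·√Δ]/D, V*_{es,d} = V_0 − V_0·[Q_0·(P*/P_0)^{(α_q+2)/α_p}·Q* + (P*/P_0)^{1/α_p}·P*·√Δ]/D. Define the resulting noncritical load voltage components V_{nl,d} = V_0 − V*_{es,d} and V_{nl,q} = −V*_{es,q}. Then V_{nl,d}² + V_{nl,q}²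 = V_0²·(P*/P_0)^{2/α_p}. -/
/-!
Put `x = P*/P₀`, `a = x^(1/α_p)` and `b = x^(α_q/α_p)`; every power of `x` in the setpoints is a
product of `a` and `b`. The load voltage `V_nl,d + i V_nl,q` is then `V₀ a / D` times the product
`(P* + i Q₀ b)(√Δ − i a Q*)`, and both factors have squared modulus `D`: the first by definition of
`D`, the second because `Δ + a² Q*² = D`. Hence `|V_nl| = V₀ a`.
-/

lemma Real.rpow_eq_rpow_mul_rpow {x e f g : ℝ} (hx : 0 < x) (h : e = f + g) :
    x ^ e = x ^ f * x ^ g := by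
  rw [h, Real.rpow_add hx]

lemma mul_div_sq_add_mul_div_sq {K : Type*} [Field K] {k u v D : K} (hD : D ≠ 0) (huv : u ^ 2 + v ^ 2 = D ^ 2) :
    (k * u / D) ^ 2 + (k * v / D) ^ 2 = k ^ 2 := by
  field_simp
  rw [huv]

theorem es_setpoints_load_voltage_magnitude_general
    (Pstar P0 V0 Q0 : ℝ) (hPstar : 0 < Pstar) (hP0 : 0 < P0)
    (αp αq Qstar : ℝ)
    (Δ : ℝ)
    (hΔ : Δ = Pstar ^ 2 - (Pstar / P0) ^ (2 / αp) * Qstar ^ 2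
            + Q0 ^ 2 * (Pstar / P0) ^ (2 * αq / αp))
    (hΔnn : Δ ≥ 0)
    (D Vesq Vesd Vnld Vnlq : ℝ)
    (hD : D = Pstar ^ 2 + Q0 ^ 2 * (Pstar / P0) ^ (2 * αq / αp))
    (hVesq : Vesq = V0 * ((Pstar / P0) ^ (2 / αp) * Pstar * Qstar
              - Q0 * (Pstar / P0) ^ ((αq + 1) / αp) * Real.sqrt Δ) / D)
    (hVesd : Vesd = V0 - V0 * (Q0 * (Pstar / P0) ^ ((αq + 2) / αp) * Qstar
              + (Pstar / P0) ^ (1 / αp) * Pstar * Real.sqrt Δ) / D)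
    (hVnld : Vnld = V0 - Vesd)
    (hVnlq : Vnlq = -Vesq) :
    Vnld ^ 2 + Vnlq ^ 2 = V0 ^ 2 * (Pstar / P0) ^ (2 / αp) := by
  have hx : 0 < Pstar / P0 := div_pos hPstar hP0
  set a := (Pstar / P0) ^ (1 / αp)
  set b := (Pstar / P0) ^ (αq / αp)
  have ha2 : (Pstar / P0) ^ (2 / αp) = a * a := Real.rpow_eq_rpow_mul_rpow hx (by ring)
  have hb2 : (Pstar / P0) ^ (2 * αq / αp) = b * b := Real.rpow_eq_rpow_mul_rpow hx (by ring)
  have hba : (Pstar / P0) ^ ((αq + 1) / αp) = b * a := Real.rpow_eq_rpow_mul_rpow hx (by ring)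
  have hbaa : (Pstar / P0) ^ ((αq + 2) / αp) = b * a * a := by
    rw [Real.rpow_eq_rpow_mul_rpow (f := (αq + 1) / αp) (g := 1 / αp) hx (by ring), hba]
  have hD_sq : D = Pstar ^ 2 + (Q0 * b) ^ 2 := by rw [hD, hb2]; ring
  have hD_ne : D ≠ 0 := by rw [hD_sq]; positivity
  have hΔ_add : Real.sqrt Δ ^ 2 + (a * Qstar) ^ 2 = D := by
    rw [Real.sq_sqrt hΔnn, hΔ, hD, ha2]; ring
  have hnld : Vnld = V0 * a * (Q0 * b * (a * Qstar) + Pstar * Real.sqrt Δ) / D := by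
    rw [hVnld, hVesd, hbaa]; ring
  have hnlq : Vnlq = V0 * a * (Q0 * b * Real.sqrt Δ - Pstar * (a * Qstar)) / D := by
    rw [hVnlq, hVesq, ha2, hba]; ring
  rw [hnld, hnlq, ha2, ← sq, ← mul_pow]
  refine mul_div_sq_add_mul_div_sq hD_ne ?_
  calc (Q0 * b * (a * Qstar) + Pstar * Real.sqrt Δ) ^ 2
        + (Q0 * b * Real.sqrt Δ - Pstar * (a * Qstar)) ^ 2
      = (Pstar ^ 2 + (Q0 * b) ^ 2) * (Real.sqrt Δ ^ 2 + (a * Qstar) ^ 2) := by ring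
    _ = D ^ 2 := by rw [← hD_sq, hΔ_add, sq]

theorem es_setpoints_load_voltage_magnitude
    (Pstar P0 V0 Q0 : ℝ) (hPstar : 0 < Pstar) (hP0 : 0 < P0) (hV0 : 0 < V0) (hQ0 : 0 < Q0)
    (αp αq Qstar : ℝ) (hαp : αp ≠ 0)
    (Δ : ℝ)
    (hΔ : Δ = Pstar ^ 2 - (Pstar / P0) ^ (2 / αp) * Qstar ^ 2
            + Q0 ^ 2 * (Pstar / P0) ^ (2 * αq / αp))
    (hΔnn : Δ ≥ 0)
    (D Vesq Vesd Vnld Vnlq : ℝ)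
    (hD : D = Pstar ^ 2 + Q0 ^ 2 * (Pstar / P0) ^ (2 * αq / αp))
    (hVesq : Vesq = V0 * ((Pstar / P0) ^ (2 / αp) * Pstar * Qstar
              - Q0 * (Pstar / P0) ^ ((αq + 1) / αp) * Real.sqrt Δ) / D)
    (hVesd : Vesd = V0 - V0 * (Q0 * (Pstar / P0) ^ ((αq + 2) / αp) * Qstar
              + (Pstar / P0) ^ (1 / αp) * Pstar * Real.sqrt Δ) / D)
    (hVnld : Vnld = V0 - Vesd)
    (hVnlq : Vnlq = -Vesq) :
    Vnld ^ 2 + Vnlq ^ 2 = V0 ^ 2 * (Pstar / P0) ^ (2 / αp) :=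
  es_setpoints_load_voltage_magnitude_general Pstar P0 V0 Q0 hPstar hP0 αp αq Qstar Δ hΔ hΔnn D Vesq
    Vesd Vnld Vnlq hD hVesq hVesd hVnld hVnlq
end

section
/- Let P*, P_0, V_0, Q_0 be positive reals, α_p ≠ 0, α_q, Q* reals, with Δ = P*² − (P*/P_0)^{2/α_p}·Q*² + Q_0²·(P*/P_0)^{2α_q/α_p} ≥ 0. Define D, V*_{es,q}, V*_{es,d} as in equation (11) of the paper, set V_{nl,d} = V_0 − V*_{es,d}, V_{nl,q} = −V*_{es,q}, I_q = −Q*/V_0, Q_nl = Q_0·(P*/P_0)^{α_q/α_p}, and I_d = (P*·V_{nl,d} + Q_nl·V_{nl,q})/(V_{nl,d}² + V_{nl,q}²). Then V_{nl,d}·I_d + V_{nl,q}·I_q = P*, V_{nl,q}·I_d − V_{nl,d}·I_q = Q_nl, and −V_0·I_q = Q*. -/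
theorem es_setpoints_full_verification
    (Pstar P0 V0 Q0 : ℝ) (hPstar : 0 < Pstar) (hP0 : 0 < P0) (hV0 : 0 < V0) (hQ0 : 0 < Q0)
    (αp αq Qstar : ℝ) (hαp : αp ≠ 0)
    (Δ : ℝ)
    (hΔ : Δ = Pstar ^ 2 - (Pstar / P0) ^ (2 / αp) * Qstar ^ 2
            + Q0 ^ 2 * (Pstar / P0) ^ (2 * αq / αp))
    (hΔnn : Δ ≥ 0)
    (D Vesq Vesd Vnld Vnlq Iq Qnl Id : ℝ)
    (hD : D = Pstar ^ 2 + Q0 ^ 2 * (Pstar / P0) ^ (2 * αq / αp))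
    (hVesq : Vesq = V0 * ((Pstar / P0) ^ (2 / αp) * Pstar * Qstar
              - Q0 * (Pstar / P0) ^ ((αq + 1) / αp) * Real.sqrt Δ) / D)
    (hVesd : Vesd = V0 - V0 * (Q0 * (Pstar / P0) ^ ((αq + 2) / αp) * Qstar
              + (Pstar / P0) ^ (1 / αp) * Pstar * Real.sqrt Δ) / D)
    (hVnld : Vnld = V0 - Vesd)
    (hVnlq : Vnlq = -Vesq)
    (hIq : Iq = -(Qstar / V0))
    (hQnl : Qnl = Q0 * (Pstar / P0) ^ (αq / αp))
    (hId : Id = (Pstar * Vnld + Qnl * Vnlq) / (Vnld ^ 2 + Vnlq ^ 2)) :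
    Vnld * Id + Vnlq * Iq = Pstar ∧
    Vnlq * Id - Vnld * Iq = Qnl ∧
    -(V0 * Iq) = Qstar := by
  have hr : (0:ℝ) < Pstar / P0 := div_pos hPstar hP0
  set r := Pstar / P0 with hr'
  set a := r ^ (1 / αp) with ha'
  set b := r ^ (αq / αp) with hb'
  set s := Real.sqrt Δ with hs'
  have ha : 0 < a := Real.rpow_pos_of_pos hr _
  have hb : 0 < b := Real.rpow_pos_of_pos hr _
  have hs2 : s ^ 2 = Δ := Real.sq_sqrt hΔnn
  have h2 : r ^ (2 / αp) = a ^ 2 := by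
    rw [ha', ← Real.rpow_natCast (r ^ (1/αp)) 2, ← Real.rpow_mul hr.le]
    norm_num; ring_nf
  have h2q : r ^ (2 * αq / αp) = b ^ 2 := by
    rw [hb', ← Real.rpow_natCast (r ^ (αq/αp)) 2, ← Real.rpow_mul hr.le]
    norm_num; ring_nf
  have hab : r ^ ((αq + 1) / αp) = b * a := by
    rw [ha', hb', ← Real.rpow_add hr]; ring_nf
  have ha2b : r ^ ((αq + 2) / αp) = b * a ^ 2 := by
    rw [show (αq + 2) / αp = αq / αp + 2 / αp by ring, Real.rpow_add hr, h2, hb']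
  have hDpos : 0 < D := by rw [hD, h2q]; positivity
  have hDne : D ≠ 0 := ne_of_gt hDpos
  have hD' : D = Pstar ^ 2 + Q0 ^ 2 * b ^ 2 := by rw [hD, h2q]
  have hsΔ : s ^ 2 = Pstar ^ 2 - a ^ 2 * Qstar ^ 2 + Q0 ^ 2 * b ^ 2 := by
    rw [hs2, hΔ, h2, h2q]
  -- explicit forms
  have hVnld' : Vnld = V0 * a * (Q0 * a * b * Qstar + Pstar * s) / D := by
    rw [hVnld, hVesd, ha2b, ha']; ring
  have hVnlq' : Vnlq = V0 * a * (-(a * Pstar * Qstar - Q0 * b * s)) / D := by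
    rw [hVnlq, hVesq, h2, hab, ha']; ring
  have hXY : (Q0 * a * b * Qstar + Pstar * s) ^ 2
      + (-(a * Pstar * Qstar - Q0 * b * s)) ^ 2 = D ^ 2 := by
    rw [hD']
    linear_combination (Pstar ^ 2 + Q0 ^ 2 * b ^ 2) * hsΔ
  have hnorm : Vnld ^ 2 + Vnlq ^ 2 = (V0 * a) ^ 2 := by
    have e : Vnld ^ 2 + Vnlq ^ 2 = (V0 * a) ^ 2
        * ((Q0 * a * b * Qstar + Pstar * s) ^ 2
          + (-(a * Pstar * Qstar - Q0 * b * s)) ^ 2) / D ^ 2 := by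
      rw [hVnld', hVnlq']; field_simp
    rw [e, hXY]
    field_simp
  have hQnl' : Qnl = Q0 * b := by rw [hQnl, hb']
  have hId' : Id = (Pstar * Vnld + Q0 * b * Vnlq) / (V0 * a) ^ 2 := by
    rw [hId, hnorm, hQnl']
  have key1 : (Q0 * a * b * Qstar + Pstar * s)
        * (Pstar * (Q0 * a * b * Qstar + Pstar * s)
          + Q0 * b * (-(a * Pstar * Qstar - Q0 * b * s)))
      - a * (-(a * Pstar * Qstar - Q0 * b * s)) * Qstar * D = Pstar * D ^ 2 := by
    linear_combination Pstar * hXY - a * (-(a * Pstar * Qstar - Q0 * b * s)) * Qstar * hD'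
  have key2 : (-(a * Pstar * Qstar - Q0 * b * s))
        * (Pstar * (Q0 * a * b * Qstar + Pstar * s)
          + Q0 * b * (-(a * Pstar * Qstar - Q0 * b * s)))
      + a * (Q0 * a * b * Qstar + Pstar * s) * Qstar * D = Q0 * b * D ^ 2 := by
    linear_combination Q0 * b * hXY + a * (Q0 * a * b * Qstar + Pstar * s) * Qstar * hD'
  refine ⟨?_, ?_, ?_⟩
  · have e : Vnld * Id + Vnlq * Iq = ((Q0 * a * b * Qstar + Pstar * s)
        * (Pstar * (Q0 * a * b * Qstar + Pstar * s)
          + Q0 * b * (-(a * Pstar * Qstar - Q0 * b * s)))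
      - a * (-(a * Pstar * Qstar - Q0 * b * s)) * Qstar * D) / D ^ 2 := by
      rw [hId', hIq, hVnld', hVnlq']; field_simp; ring
    rw [e, key1]
    field_simp
  · have e : Vnlq * Id - Vnld * Iq = ((-(a * Pstar * Qstar - Q0 * b * s))
        * (Pstar * (Q0 * a * b * Qstar + Pstar * s)
          + Q0 * b * (-(a * Pstar * Qstar - Q0 * b * s)))
      + a * (Q0 * a * b * Qstar + Pstar * s) * Qstar * D) / D ^ 2 := by
      rw [hId', hIq, hVnld', hVnlq']; field_simp; ring
    rw [e, key2, hQnl']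
    field_simp
  · rw [hIq]; field_simp
end
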